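/- arXiv:0902.1605 — 2 statements merged into one kernel-verified Lean document; each statement's English description precedes it below -/
import Mathlib

section
/- For every integer n ≥ 1 that is a perfect square, the set disjointness problem Disj_n can be solved by an mp2s-automaton over the data set D_n with n + 2 − √n states, √n forward heads on each of the two input streams, and no backward heads. -/
/-- An mp2s-automaton with data set `D`, `m` states, `kf` forward heads and `kb` backward
heads on each of the two input streams.  The heads are indexed by `Fin (2*kf + 2*kb)`:
indices `< kf` are the forward heads on the first stream, indices in `[kf, 2*kf)` are the
forward heads on the second stream, indices in `[2*kf, 2*kf + kb)` are the backward heads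
on the first stream, and the remaining indices are the backward heads on the second stream.
In the transition function, `none` plays the role of the special symbol `end`, and
`true`/`false` mean `advance`/`stay`. -/
structure MP2S (D : Type) (m kf kb : ℕ) where
  /-- the state space -/
  Q : Type
  [fintypeQ : Fintype Q]
  cardQ : Fintype.card Q = m
  /-- the designated start state -/
  start : Q
  /-- the designated set of accepting states -/
  accept : Set Q
  /-- the deterministic transition function -/
  δ : Q → (Fin (2*kf + 2*kb) → Option D) → Q × (Fin (2*kf + 2*kb) → Bool)

namespace MP2S

attribute [instance] fintypeQ

variable {D : Type} {m kf kb : ℕ}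

/-- The input stream that head `i` moves over (`S` or `T`). -/
def streamOf (S T : List D) (i : Fin (2*kf + 2*kb)) : List D :=
  if i.val < kf ∨ (2*kf ≤ i.val ∧ i.val < 2*kf + kb) then S else T

/-- The symbol currently observed by head `i`, where `pos i` counts the number of
advances head `i` has made so far; forward heads read their stream from left to right,
backward heads from right to left, and `none` (the `end` symbol) is observed once the
head has been advanced beyond the last element it can access. -/
def obs (S T : List D) (pos : Fin (2*kf + 2*kb) → ℕ) (i : Fin (2*kf + 2*kb)) : Option D :=
  let L := streamOf S T i
  if pos i < L.length then
    if i.val < 2*kf then L[pos i]? else L[L.length - 1 - pos i]?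
  else none

/-- All heads have passed their entire stream. -/
def Done (S T : List D) (pos : Fin (2*kf + 2*kb) → ℕ) : Prop :=
  ∀ i, (streamOf S T i).length ≤ pos i

instance (S T : List D) (pos : Fin (2*kf + 2*kb) → ℕ) : Decidable (Done S T pos) :=
  inferInstanceAs (Decidable (∀ i, (streamOf S T i).length ≤ pos i))

/-- One computation step of the automaton on input `(S, T)`; a configuration consists of
the current state together with the number of advances each head has made so far.
Once every head has passed its entire stream the computation has ended and the
configuration stays unchanged. -/
def step (A : MP2S D m kf kb) (S T : List D) (c : A.Q × (Fin (2*kf + 2*kb) → ℕ)) :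
    A.Q × (Fin (2*kf + 2*kb) → ℕ) :=
  if Done S T c.2 then c
  else
    let r := A.δ c.1 (obs S T c.2)
    (r.1, fun i => if r.2 i then min (c.2 i + 1) (streamOf S T i).length else c.2 i)

/-- The configuration of the automaton on input `(S, T)` after `t` steps, starting from
the initial configuration. -/
def run (A : MP2S D m kf kb) (S T : List D) (t : ℕ) : A.Q × (Fin (2*kf + 2*kb) → ℕ) :=
  (A.step S T)^[t] (A.start, fun _ => 0)

/-- The automaton accepts the input `(S, T)` if its computation ends (i.e., every head has
passed its entire stream) in an accepting state. -/
def Accepts (A : MP2S D m kf kb) (S T : List D) : Prop :=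
  ∃ t, Done S T (A.run S T t).2 ∧ (A.run S T t).1 ∈ A.accept

/-- The fixed data set `D_n` of `2n` distinct items: `(i, false)` plays the role of `a_i`
and `(i, true)` plays the role of `b_i`. -/
abbrev Dn (n : ℕ) : Type := Fin n × Bool

/-- The automaton solves the set disjointness problem `Disj_n`: for all input streams
`S`, `T` over `D_n` of length `n`, it accepts iff the sets of elements occurring in `S`
and in `T` are disjoint. -/
def SolvesDisj (n : ℕ) (A : MP2S (Dn n) m kf kb) : Prop :=
  ∀ S T : List (Dn n), S.length = n → T.length = n →
    (A.Accepts S T ↔ ∀ x ∈ S, x ∉ T)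

end MP2S
namespace DisjAux
open MP2S

/-- The index of the `i`-th forward head on stream `S`. -/
def SH (s : ℕ) (i : Fin s) : Fin (2*s + 2*0) := ⟨i.val, by have := i.isLt; omega⟩

/-- The index of the `j`-th forward head on stream `T`. -/
def TH (s : ℕ) (j : Fin s) : Fin (2*s + 2*0) := ⟨s + j.val, by have := j.isLt; omega⟩

/-- Whether a "match" (equal data values on some `S`-head and some `T`-head) is visible. -/
def matchB (n s : ℕ) (o : Fin (2*s + 2*0) → Option (Dn n)) : Bool :=
  decide (∃ i j : Fin s, o (SH s i) ≠ none ∧ o (SH s i) = o (TH s j))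

/-- Whether `k` is the first `T`-head that has not yet passed the end of `T`. -/
def isFirstB (n s : ℕ) (o : Fin (2*s + 2*0) → Option (Dn n)) (k : Fin s) : Bool :=
  decide ((∀ k' : Fin s, k'.val < k.val → o (TH s k') = none) ∧ o (TH s k) ≠ none)

/-- Advance all S-heads. -/
def advS (s : ℕ) : Fin (2*s + 2*0) → Bool := fun idx => decide (idx.val < s)

/-- The transition function of our automaton. -/
def myDelta (n s : ℕ) (q : Fin (n - s) ⊕ Bool) (o : Fin (2*s + 2*0) → Option (Dn n)) :
    (Fin (n - s) ⊕ Bool) × (Fin (2*s + 2*0) → Bool) :=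
  match q with
  | .inl c =>
      (if h : c.val + 1 < n - s then .inl ⟨c.val + 1, h⟩ else .inr false,
       fun idx => decide (idx.val < s ∧ c.val < idx.val * s))
  | .inr b =>
      if matchB n s o then (.inr b, fun _ => false)
      else if ∀ j : Fin s, o (TH s j) = none then (.inr b, advS s)
      else if ∃ k : Fin s, isFirstB n s o k = true ∧ (decide ((k : ℕ) % 2 = 1)) ≠ b then
        (.inr (!b), advS s)
      else (.inr b, fun idx => decide (∃ k : Fin s, isFirstB n s o k = true ∧ idx.val = s + (k : ℕ)))

/-- Our automaton. -/
def myAuto (n s : ℕ) (hn : 1 ≤ n) (hs : n = s ^ 2) : MP2S (Dn n) (n + 2 - s) s 0 where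
  Q := Fin (n - s) ⊕ Bool
  cardQ := by
    have hs1 : 1 ≤ s := by nlinarith [sq_nonneg s]
    have hsn : s ≤ n := by nlinarith
    simp [Fintype.card_sum]
    omega
  start := if h : 0 < n - s then .inl ⟨0, h⟩ else .inr false
  accept := Set.univ
  δ := myDelta n s

attribute [reducible] myAuto

end DisjAux
namespace DisjAux
open MP2S

section Proofs

/-- Positions during the setup phase, after `c` steps. -/
def posD1 (s c : ℕ) : Fin (2*s + 2*0) → ℕ :=
  fun idx => if idx.val < s then min c (idx.val * s) else 0

/-- Positions during main phase `j`, with the sweeping `T`-head at `u`. -/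
def posC (n s j u : ℕ) : Fin (2*s + 2*0) → ℕ :=
  fun idx => if idx.val < s then idx.val * s + j
    else if idx.val - s < j then n else if idx.val - s = j then u else 0

/-- Positions during the final sweep. -/
def posF (n s v : ℕ) : Fin (2*s + 2*0) → ℕ :=
  fun idx => if idx.val < s then min (idx.val * s + (s - 1) + v) n else n

/-- The state during main phase `j`. -/
def stC (n s : ℕ) (j : ℕ) : Fin (n - s) ⊕ Bool := .inr (decide (j % 2 = 1))

variable {n s : ℕ} (S T : List (Dn n))

lemma streamOf_eval (idx : Fin (2*s + 2*0)) :
    streamOf (kf := s) (kb := 0) S T idx = if idx.val < s then S else T := by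
  have h := idx.isLt
  unfold streamOf
  by_cases hc : idx.val < s <;> simp [hc]

lemma length_streamOf (hS : S.length = n) (hT : T.length = n) (idx : Fin (2*s + 2*0)) :
    (streamOf (kf := s) (kb := 0) S T idx).length = n := by
  rw [streamOf_eval]
  split <;> simp [hS, hT]

lemma obs_eval (pos : Fin (2*s + 2*0) → ℕ) (idx : Fin (2*s + 2*0)) :
    obs S T pos idx = if idx.val < s then S[pos idx]? else T[pos idx]? := by
  have h2 : idx.val < 2 * s := by have := idx.isLt; omega
  unfold obs
  simp only [streamOf_eval S T idx]
  by_cases hc : idx.val < s <;> simp [hc, h2]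

lemma done_iff (hS : S.length = n) (hT : T.length = n) (pos : Fin (2*s + 2*0) → ℕ) :
    Done S T pos ↔ ∀ idx, n ≤ pos idx := by
  unfold Done
  constructor <;> intro h idx <;> have h2 := h idx <;>
    rw [length_streamOf S T hS hT] at * <;> exact h2

lemma mem_of_getElem? {l : List (Dn n)} {p : ℕ} {x : Dn n} (h : l[p]? = some x) : x ∈ l := by
  obtain ⟨hlt, rfl⟩ := List.getElem?_eq_some_iff.mp h
  exact List.getElem_mem hlt

lemma matchB_not_disjoint (pos : Fin (2*s + 2*0) → ℕ)
    (h : matchB n s (obs S T pos) = true) : ¬ (∀ x ∈ S, x ∉ T) := by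
  rw [matchB, decide_eq_true_iff] at h
  obtain ⟨i, j, hne, heq⟩ := h
  rw [obs_eval] at hne heq
  rw [obs_eval] at heq
  simp only [SH, TH] at hne heq
  have hiv : (i : ℕ) < s := i.isLt
  have hjv : ¬ (s + (j : ℕ) < s) := by omega
  simp only [hiv, hjv, if_true, if_false] at hne heq
  obtain ⟨x, hx⟩ := Option.ne_none_iff_exists'.mp hne
  rw [hx] at heq
  intro hdisj
  exact hdisj x (mem_of_getElem? hx) (mem_of_getElem? heq.symm)

end Proofs
end DisjAux
namespace DisjAux
open MP2S

section Proofs2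
variable {n s : ℕ} (S T : List (Dn n))

lemma sq_bound {i j : ℕ} (hi : i < s) (hj : j < s) : i * s + j < s * s := by
  have h1 : (i + 1) * s ≤ s * s := Nat.mul_le_mul_right _ (by omega)
  rw [add_mul, one_mul] at h1
  omega

lemma obsC_S (j u : ℕ) (idx : Fin (2*s + 2*0)) (h : idx.val < s) :
    obs S T (posC n s j u) idx = S[idx.val * s + j]? := by
  rw [obs_eval, if_pos h, posC, if_pos h]

lemma obsC_T (j u : ℕ) (k : Fin s) :
    obs S T (posC n s j u) (TH s k) =
      if k.val < j then T[n]? else if k.val = j then T[u]? else T[0]? := by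
  have h1 : ¬ ((TH s k).val < s) := by simp [TH]
  rw [obs_eval, if_neg h1, posC, if_neg h1]
  have h2 : (TH s k).val - s = k.val := by simp [TH]
  rw [h2]
  split
  · rfl
  · split <;> rfl

lemma some_at (u : ℕ) (hu : u < n) (hT : T.length = n) : ∃ x, T[u]? = some x := by
  rw [List.getElem?_eq_getElem (by omega)]
  exact ⟨_, rfl⟩

lemma isFirst_C (hn : 1 ≤ n) (hT : T.length = n) {j u : ℕ} (hj : j < s) (hu : u < n)
    (k : Fin s) : isFirstB n s (obs S T (posC n s j u)) k = true ↔ (k : ℕ) = j := by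
  rw [isFirstB, decide_eq_true_iff]
  constructor
  · rintro ⟨hall, hne⟩
    by_contra hkj
    rcases Nat.lt_or_ge (k : ℕ) j with hlt | hge
    · apply hne
      rw [obsC_T, if_pos hlt]
      exact List.getElem?_eq_none (by omega)
    · have hjk : j < (k : ℕ) := by omega
      have := hall ⟨j, hj⟩ hjk
      rw [obsC_T, if_neg (by simp), if_pos rfl] at this
      obtain ⟨x, hx⟩ := some_at T u hu hT
      simp [hx] at this
  · intro hkj
    constructor
    · intro k' hk'
      rw [obsC_T, if_pos (by omega)]
      exact List.getElem?_eq_none (by omega)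
    · rw [obsC_T, if_neg (by omega), if_pos hkj]
      obtain ⟨x, hx⟩ := some_at T u hu hT
      simp [hx]

end Proofs2
end DisjAux
namespace DisjAux
open MP2S

section Proofs3
variable {n s : ℕ} (hn : 1 ≤ n) (hs : n = s ^ 2) (S T : List (Dn n))
  (hS : S.length = n) (hT : T.length = n)

lemma myDelta_inl (c : Fin (n - s)) (o : Fin (2*s + 2*0) → Option (Dn n)) :
    myDelta n s (.inl c) o =
      (if h : c.val + 1 < n - s then .inl ⟨c.val + 1, h⟩ else .inr false,
       fun idx => decide (idx.val < s ∧ c.val < idx.val * s)) := rfl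

lemma myDelta_inr (b : Bool) (o : Fin (2*s + 2*0) → Option (Dn n)) :
    myDelta n s (.inr b) o =
      (if matchB n s o then (.inr b, fun _ => false)
      else if ∀ j : Fin s, o (TH s j) = none then (.inr b, advS s)
      else if ∃ k : Fin s, isFirstB n s o k = true ∧ (decide ((k : ℕ) % 2 = 1)) ≠ b then
        (.inr (!b), advS s)
      else (.inr b, fun idx => decide (∃ k : Fin s, isFirstB n s o k = true ∧ idx.val = s + (k : ℕ)))) := rfl

include hS hT

lemma step_eval (st : Fin (n - s) ⊕ Bool) (pos : Fin (2*s + 2*0) → ℕ)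
    (hnd : ¬ Done S T pos) :
    (myAuto n s hn hs).step S T (st, pos) =
      ((myDelta n s st (obs S T pos)).1,
        fun i => if (myDelta n s st (obs S T pos)).2 i then min (pos i + 1) n else pos i) := by
  show MP2S.step _ S T _ = _
  rw [MP2S.step, if_neg hnd]
  refine Prod.ext rfl ?_
  funext i
  show (if (myDelta n s st (obs S T pos)).2 i then _ else _) = _
  rw [length_streamOf S T hS hT]

/-- The main sweeping step: phase `j`, `T`-head `j` advances from `u` to `u+1`. -/
lemma step_C_sweep {j u : ℕ} (hj : j < s) (hu : u < n)
    (hm : matchB n s (obs S T (posC n s j u)) = false) :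
    (myAuto n s hn hs).step S T (stC n s j, posC n s j u) =
      (stC n s j, posC n s j (u + 1)) := by
  have hnd : ¬ Done S T (posC n s j u) := by
    rw [done_iff S T hS hT]
    intro h
    have := h (TH s ⟨j, hj⟩)
    rw [posC, if_neg (by simp [TH]), TH] at this
    simp at this
    omega
  rw [step_eval hn hs S T hS hT _ _ hnd]
  have hone : ¬ (∀ k : Fin s, obs S T (posC n s j u) (TH s k) = none) := by
    intro h
    have := h ⟨j, hj⟩
    rw [obsC_T, if_neg (by simp), if_pos rfl] at this
    obtain ⟨x, hx⟩ := some_at T u hu hT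
    simp [hx] at this
  have hpar : ¬ (∃ k : Fin s, isFirstB n s (obs S T (posC n s j u)) k = true ∧
      (decide ((k : ℕ) % 2 = 1)) ≠ decide (j % 2 = 1)) := by
    rintro ⟨k, hk1, hk2⟩
    rw [isFirst_C S T hn hT hj hu] at hk1
    rw [hk1] at hk2
    exact hk2 rfl
  rw [stC, myDelta_inr, hm]
  simp only [Bool.false_eq_true, if_false, if_neg hone, if_neg hpar]
  refine Prod.ext rfl ?_
  funext idx
  simp only
  by_cases hadv : s ≤ idx.val ∧ idx.val - s = j
  · rw [if_pos, posC, posC]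
    · split_ifs <;> omega
    · simp only [decide_eq_true_iff]
      exact ⟨⟨idx.val - s, by omega⟩, (isFirst_C S T hn hT hj hu _).mpr hadv.2,
        by show idx.val = s + (idx.val - s); omega⟩
  · rw [if_neg, posC, posC]
    · split_ifs <;> omega
    · simp only [decide_eq_true_iff]
      rintro ⟨k, hk1, hk2⟩
      rw [isFirst_C S T hn hT hj hu] at hk1
      have := k.isLt
      omega

end Proofs3
end DisjAux
namespace DisjAux
open MP2S

section Proofs4
variable {n s : ℕ} (hn : 1 ≤ n) (hs : n = s ^ 2) (S T : List (Dn n))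
  (hS : S.length = n) (hT : T.length = n)

lemma s_le_n {n s : ℕ} (hn : 1 ≤ n) (hs : n = s ^ 2) : 1 ≤ s ∧ s ≤ n := by
  have h1 : 1 ≤ s := by nlinarith [sq_nonneg s]
  have h2 : s * 1 ≤ s * s := Nat.mul_le_mul_left s h1
  have hss : n = s * s := by rw [hs]; ring
  omega

lemma isFirst_Cend (hn : 1 ≤ n) (hT : T.length = n) {j : ℕ} (hj : j + 1 < s)
    (k : Fin s) : isFirstB n s (obs S T (posC n s j n)) k = true ↔ (k : ℕ) = j + 1 := by
  have hnone : ∀ k' : Fin s, (k' : ℕ) ≤ j → obs S T (posC n s j n) (TH s k') = none := by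
    intro k' hk'
    rw [obsC_T]
    rcases Nat.lt_or_ge (k' : ℕ) j with h | h
    · rw [if_pos h]; exact List.getElem?_eq_none (by omega)
    · rw [if_neg (by omega), if_pos (by omega)]; exact List.getElem?_eq_none (by omega)
  have hsome : ∀ k' : Fin s, j < (k' : ℕ) → obs S T (posC n s j n) (TH s k') = T[0]? := by
    intro k' hk'
    rw [obsC_T, if_neg (by omega), if_neg (by omega)]
  rw [isFirstB, decide_eq_true_iff]
  constructor
  · rintro ⟨hall, hne⟩
    by_contra hkj
    rcases Nat.lt_or_ge (k : ℕ) (j + 1) with hlt | hge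
    · exact hne (hnone k (by omega))
    · have := hall ⟨j + 1, hj⟩ (by show j + 1 < (k : ℕ); omega)
      rw [hsome ⟨j + 1, hj⟩ (by show j < j + 1; omega)] at this
      rw [List.getElem?_eq_getElem (by omega)] at this
      simp at this
  · intro hkj
    refine ⟨fun k' hk' => hnone k' (by omega), ?_⟩
    rw [hsome k (by omega), List.getElem?_eq_getElem (by omega)]
    simp

include hS hT

/-- Phase boundary: from phase `j` to phase `j+1` (for `j + 1 < s`). -/
lemma step_C_next {j : ℕ} (hj : j + 1 < s)
    (hm : matchB n s (obs S T (posC n s j n)) = false) :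
    (myAuto n s hn hs).step S T (stC n s j, posC n s j n) =
      (stC n s (j + 1), posC n s (j + 1) 0) := by
  obtain ⟨hs1, hsn⟩ := s_le_n hn hs
  have hnd : ¬ Done S T (posC n s j n) := by
    rw [done_iff S T hS hT]
    intro h
    have := h (SH s ⟨0, hs1⟩)
    rw [posC, if_pos (by show (0:ℕ) < s; omega)] at this
    simp only [SH, Nat.zero_mul, Nat.zero_add] at this
    omega
  rw [step_eval hn hs S T hS hT _ _ hnd]
  have hone : ¬ (∀ k : Fin s, obs S T (posC n s j n) (TH s k) = none) := by
    intro h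
    have := h ⟨j + 1, hj⟩
    rw [obsC_T, if_neg (by show ¬ (j + 1 < j); omega),
      if_neg (by show ¬ (j + 1 = j); omega)] at this
    rw [List.getElem?_eq_getElem (by omega)] at this
    simp at this
  have hpar : (∃ k : Fin s, isFirstB n s (obs S T (posC n s j n)) k = true ∧
      (decide ((k : ℕ) % 2 = 1)) ≠ decide (j % 2 = 1)) := by
    refine ⟨⟨j + 1, hj⟩, (isFirst_Cend S T hn hT hj _).mpr (by rfl), ?_⟩
    simp only [ne_eq, decide_eq_decide]
    omega
  rw [stC, myDelta_inr, hm]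
  simp only [Bool.false_eq_true, if_false, if_neg hone, if_pos hpar]
  refine Prod.ext ?_ ?_
  · show Sum.inr _ = _
    rw [stC]
    congr 1
    rcases Nat.mod_two_eq_zero_or_one j with h | h <;>
      simp [h, Nat.add_mod, decide_eq_true_iff]
  · funext idx
    simp only [advS, decide_eq_true_eq]
    by_cases hidx : idx.val < s
    · rw [if_pos (by simp [hidx]), posC, posC, if_pos hidx, if_pos hidx]
      have := sq_bound (s := s) hidx hj
      have hss : n = s * s := by rw [hs]; ring
      omega
    · rw [if_neg (by simp [hidx]), posC, posC, if_neg hidx, if_neg hidx]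
      split_ifs <;> omega

/-- End of the last phase: start the final sweep. -/
lemma step_C_last (hs1 : 1 ≤ s) :
    (myAuto n s hn hs).step S T (stC n s (s - 1), posC n s (s - 1) n) =
      (stC n s (s - 1), posF n s 1) := by
  have hsn : s ≤ n := (s_le_n hn hs).2
  have hnd : ¬ Done S T (posC n s (s - 1) n) := by
    rw [done_iff S T hS hT]
    intro h
    have := h (SH s ⟨0, hs1⟩)
    rw [posC, if_pos (by show (0:ℕ) < s; omega)] at this
    simp only [SH, Nat.zero_mul, Nat.zero_add] at this
    omega
  rw [step_eval hn hs S T hS hT _ _ hnd]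
  have hall : ∀ k : Fin s, obs S T (posC n s (s - 1) n) (TH s k) = none := by
    intro k
    rw [obsC_T]
    have := k.isLt
    split_ifs <;> exact List.getElem?_eq_none (by omega)
  have hm : matchB n s (obs S T (posC n s (s - 1) n)) = false := by
    rw [matchB, decide_eq_false_iff_not]
    rintro ⟨i, j, hne, heq⟩
    rw [hall j] at heq
    exact hne heq
  rw [stC, myDelta_inr, hm]
  simp only [Bool.false_eq_true, if_false, if_pos hall]
  refine Prod.ext rfl ?_
  funext idx
  simp only [advS, decide_eq_true_eq]
  by_cases hidx : idx.val < s
  · rw [if_pos (by simp [hidx]), posC, posF, if_pos hidx, if_pos hidx]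
  · have hk : idx.val - s < s := by have := idx.isLt; omega
    rw [if_neg (by simp [hidx]), posC, posF, if_neg hidx, if_neg hidx]
    split_ifs <;> omega

/-- A step of the final sweep. -/
lemma step_F {v : ℕ} (hv : s - 1 + v < n) :
    (myAuto n s hn hs).step S T (stC n s (s - 1), posF n s v) =
      (stC n s (s - 1), posF n s (v + 1)) := by
  obtain ⟨hs1, hsn⟩ := s_le_n hn hs
  have hnd : ¬ Done S T (posF n s v) := by
    rw [done_iff S T hS hT]
    intro h
    have := h (SH s ⟨0, hs1⟩)
    rw [posF, if_pos (by show (0:ℕ) < s; omega)] at this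
    simp only [SH, Nat.zero_mul, Nat.zero_add] at this
    omega
  rw [step_eval hn hs S T hS hT _ _ hnd]
  have hall : ∀ k : Fin s, obs S T (posF n s v) (TH s k) = none := by
    intro k
    rw [obs_eval, if_neg (by simp [TH]), posF, if_neg (by simp [TH])]
    exact List.getElem?_eq_none (by omega)
  have hm : matchB n s (obs S T (posF n s v)) = false := by
    rw [matchB, decide_eq_false_iff_not]
    rintro ⟨i, j, hne, heq⟩
    rw [hall j] at heq
    exact hne heq
  rw [stC, myDelta_inr, hm]
  simp only [Bool.false_eq_true, if_false, if_pos hall]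
  refine Prod.ext rfl ?_
  funext idx
  simp only [advS, decide_eq_true_eq]
  by_cases hidx : idx.val < s
  · rw [if_pos (by simp [hidx]), posF, posF, if_pos hidx, if_pos hidx]
    omega
  · rw [if_neg (by simp [hidx]), posF, posF, if_neg hidx, if_neg hidx]

/-- A setup step. -/
lemma step_setup {c : ℕ} (hc : c < n - s) :
    (myAuto n s hn hs).step S T (.inl ⟨c, hc⟩, posD1 s c) =
      ((if h : c + 1 < n - s then .inl ⟨c + 1, h⟩ else .inr false), posD1 s (c + 1)) := by
  obtain ⟨hs1, hsn⟩ := s_le_n hn hs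
  have hnd : ¬ Done S T (posD1 s c) := by
    rw [done_iff S T hS hT]
    intro h
    have := h (TH s ⟨0, hs1⟩)
    rw [posD1, if_neg (by show ¬ ((TH s ⟨0, hs1⟩).val < s); simp [TH])] at this
    omega
  rw [step_eval hn hs S T hS hT _ _ hnd]
  rw [myDelta_inl]
  refine Prod.ext rfl ?_
  funext idx
  simp only
  by_cases hadv : idx.val < s ∧ c < idx.val * s
  · rw [if_pos (by simpa using hadv), posD1, posD1, if_pos hadv.1, if_pos hadv.1]
    omega
  · rw [if_neg (by simpa using hadv), posD1, posD1]
    by_cases hidx : idx.val < s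
    · rw [if_pos hidx, if_pos hidx]
      have : ¬ (c < idx.val * s) := fun hcc => hadv ⟨hidx, hcc⟩
      omega
    · rw [if_neg hidx, if_neg hidx]

/-- On a visible match (in a main-phase state), the configuration freezes. -/
lemma step_freeze (b : Bool) (pos : Fin (2*s + 2*0) → ℕ)
    (hm : matchB n s (obs S T pos) = true) :
    (myAuto n s hn hs).step S T (.inr b, pos) = (.inr b, pos) := by
  have hnd : ¬ Done S T pos := by
    rw [done_iff S T hS hT]
    intro h
    rw [matchB, decide_eq_true_iff] at hm
    obtain ⟨i, j, hne, _⟩ := hm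
    apply hne
    rw [obs_eval, if_pos (by simp [SH])]
    exact List.getElem?_eq_none (by rw [hS]; exact h (SH s i))
  rw [step_eval hn hs S T hS hT _ _ hnd, myDelta_inr, if_pos hm]
  refine Prod.ext rfl ?_
  funext idx
  simp

/-- At the end of the final sweep, the computation is done. -/
lemma done_F {v : ℕ} (hv : n ≤ s - 1 + v) : Done S T (posF n s v) := by
  rw [done_iff S T hS hT]
  intro idx
  rw [posF]
  split_ifs <;> omega

end Proofs4
end DisjAux
namespace DisjAux
open MP2S

section Proofs5
variable {n s : ℕ} (hn : 1 ≤ n) (hs : n = s ^ 2) (S T : List (Dn n))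
  (hS : S.length = n) (hT : T.length = n)

lemma run_succ (A : MP2S (Dn n) (n + 2 - s) s 0) (t : ℕ) :
    A.run S T (t + 1) = A.step S T (A.run S T t) := by
  rw [MP2S.run, MP2S.run, Function.iterate_succ_apply']

/-- Reachability of a configuration along the run. -/
def Reach (cfg : (Fin (n - s) ⊕ Bool) × (Fin (2*s + 2*0) → ℕ)) : Prop :=
  ∃ t, (myAuto n s hn hs).run S T t = cfg

lemma reach_step {c c'} (h : Reach hn hs S T c)
    (hstep : (myAuto n s hn hs).step S T c = c') : Reach hn hs S T c' := by
  obtain ⟨t, ht⟩ := h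
  exact ⟨t + 1, by rw [run_succ, ht, hstep]⟩

lemma posD1_zero : posD1 s 0 = (fun _ => 0) := by
  funext idx
  rw [posD1]
  split <;> simp

lemma posD1_top (hs : n = s ^ 2) : posD1 s (n - s) = posC n s 0 0 := by
  have hss : n = s * s := by rw [hs]; ring
  funext idx
  rw [posD1, posC]
  by_cases hidx : idx.val < s
  · rw [if_pos hidx, if_pos hidx]
    have h1 : (idx.val + 1) * s ≤ s * s := Nat.mul_le_mul_right _ (by omega)
    rw [add_mul, one_mul] at h1
    omega
  · rw [if_neg hidx, if_neg hidx]
    split_ifs <;> omega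

lemma posC_zero_of_s_eq_one (h1 : s = 1) (hn1 : n = 1) : posC n s 0 0 = (fun _ => 0) := by
  funext idx
  have := idx.isLt
  rw [posC]
  subst h1
  by_cases hidx : idx.val < 1
  · rw [if_pos hidx]
    omega
  · rw [if_neg hidx]
    split_ifs <;> omega

lemma start_eval : (myAuto n s hn hs).start =
    (if h : 0 < n - s then .inl ⟨0, h⟩ else .inr false) := rfl

include hS hT

lemma reach_C00 : Reach hn hs S T (stC n s 0, posC n s 0 0) := by
  obtain ⟨hs1, hsn⟩ := s_le_n hn hs
  by_cases h0 : 0 < n - s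
  · have hsetup : ∀ c, c < n - s → ∀ (hc : c < n - s),
        Reach hn hs S T (.inl ⟨c, hc⟩, posD1 s c) := by
      intro c
      induction c with
      | zero => intro _ hc
                exact ⟨0, by rw [MP2S.run, Function.iterate_zero_apply, start_eval,
                  dif_pos h0, posD1_zero]⟩
      | succ c ih =>
          intro hlt hc
          have hstep := step_setup hn hs S T hS hT (show c < n - s by omega)
          rw [dif_pos hc] at hstep
          exact reach_step hn hs S T (ih (by omega) (by omega)) hstep
    have hlast := step_setup hn hs S T hS hT (show n - s - 1 < n - s by omega)
    rw [dif_neg (by omega)] at hlast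
    have : n - s - 1 + 1 = n - s := by omega
    rw [this, posD1_top hs] at hlast
    exact reach_step hn hs S T (hsetup (n - s - 1) (by omega) (by omega)) hlast
  · have h1 : s = 1 := by
      have hss : n = s * s := by rw [hs]; ring
      have : n = s := by omega
      have : s * s = s * 1 := by omega
      exact Nat.eq_of_mul_eq_mul_left hs1 this
    have hn1 : n = 1 := by omega
    refine ⟨0, ?_⟩
    rw [MP2S.run, Function.iterate_zero_apply, start_eval, dif_neg h0,
      posC_zero_of_s_eq_one h1 hn1]
    rfl

/-- Direction 1: if the streams are disjoint, the automaton reaches `Done`. -/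
lemma disjoint_accepts (hdisj : ∀ x ∈ S, x ∉ T) :
    (myAuto n s hn hs).Accepts S T := by
  obtain ⟨hs1, hsn⟩ := s_le_n hn hs
  have hm : ∀ pos, matchB n s (obs S T pos) = false := by
    intro pos
    by_contra h
    exact matchB_not_disjoint S T pos (by simpa using h) hdisj
  have hsweep : ∀ j, j < s → Reach hn hs S T (stC n s j, posC n s j 0) →
      ∀ u, u ≤ n → Reach hn hs S T (stC n s j, posC n s j u) := by
    intro j hj h0 u
    induction u with
    | zero => intro _; exact h0
    | succ u ih =>
        intro hu
        exact reach_step hn hs S T (ih (by omega))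
          (step_C_sweep hn hs S T hS hT hj (by omega) (hm _))
  have hphase : ∀ j, j < s → Reach hn hs S T (stC n s j, posC n s j 0) := by
    intro j
    induction j with
    | zero => intro _; exact reach_C00 hn hs S T hS hT
    | succ j ih =>
        intro hj
        exact reach_step hn hs S T
          (hsweep j (by omega) (ih (by omega)) n (le_refl n))
          (step_C_next hn hs S T hS hT hj (hm _))
  have hF1 : Reach hn hs S T (stC n s (s - 1), posF n s 1) :=
    reach_step hn hs S T
      (hsweep (s - 1) (by omega) (hphase (s - 1) (by omega)) n (le_refl n))
      (step_C_last hn hs S T hS hT hs1)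
  have hFv : ∀ w, w ≤ n - s → Reach hn hs S T (stC n s (s - 1), posF n s (1 + w)) := by
    intro w
    induction w with
    | zero => intro _; exact hF1
    | succ w ih =>
        intro hw
        have : 1 + (w + 1) = (1 + w) + 1 := by omega
        rw [this]
        exact reach_step hn hs S T (ih (by omega))
          (step_F hn hs S T hS hT (by omega))
  obtain ⟨t, ht⟩ := hFv (n - s) (le_refl _)
  refine ⟨t, ?_, Set.mem_univ _⟩
  rw [ht]
  exact done_F S T hS hT (by omega)

end Proofs5
end DisjAux
namespace DisjAux
open MP2S

section Proofs6
variable {n s : ℕ} (hn : 1 ≤ n) (hs : n = s ^ 2) (S T : List (Dn n))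
  (hS : S.length = n) (hT : T.length = n)

/-- "No match among the pairs compared so far": all of block-column pairs `(i*s+jj, p')`
with `jj < j`, or `jj = j` and `p' < u`, carry distinct data values. -/
def NM (j u : ℕ) : Prop :=
  ∀ i jj p' : ℕ, i < s → jj < s → p' < n →
    (jj < j ∨ (jj = j ∧ p' < u)) → S[i * s + jj]? ≠ T[p']?

/-- The run invariant. -/
def Inv (cfg : (Fin (n - s) ⊕ Bool) × (Fin (2*s + 2*0) → ℕ)) : Prop :=
  (∃ c : Fin (n - s), cfg = (.inl c, posD1 s c.val))
  ∨ (∃ j u, j < s ∧ u ≤ n ∧ cfg = (stC n s j, posC n s j u) ∧ NM (n := n) (s := s) S T j u)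
  ∨ (∃ v, 1 ≤ v ∧ cfg = (stC n s (s - 1), posF n s v) ∧ NM (n := n) (s := s) S T s 0)
  ∨ ((∃ b, cfg.1 = Sum.inr b) ∧ matchB n s (obs S T cfg.2) = true)

lemma step_done (A : MP2S (Dn n) (n + 2 - s) s 0) (cfg) (hd : Done S T cfg.2) :
    A.step S T cfg = cfg := by
  rw [MP2S.step, if_pos hd]

include hS hT

lemma matchB_true_notDone (pos : Fin (2*s + 2*0) → ℕ)
    (hm : matchB n s (obs S T pos) = true) : ¬ Done S T pos := by
  rw [done_iff S T hS hT]
  intro h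
  rw [matchB, decide_eq_true_iff] at hm
  obtain ⟨i, j, hne, _⟩ := hm
  apply hne
  rw [obs_eval, if_pos (by simp [SH])]
  exact List.getElem?_eq_none (by rw [hS]; exact h (SH s i))

omit hS hT in
include hs hS in
lemma new_pair {j u : ℕ} (hj : j < s) (hu : u < n)
    (hm : matchB n s (obs S T (posC n s j u)) = false) :
    ∀ i, i < s → S[i * s + j]? ≠ T[u]? := by
  intro i hi heq
  rw [matchB, decide_eq_false_iff_not] at hm
  apply hm
  have hss : n = s * s := by rw [hs]; ring
  have hb : i * s + j < n := by have := sq_bound hi hj; omega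
  refine ⟨⟨i, hi⟩, ⟨j, hj⟩, ?_, ?_⟩
  · rw [obsC_S _ _ _ _ _ (show (SH s ⟨i, hi⟩).val < s from hi)]
    show S[i * s + j]? ≠ none
    rw [List.getElem?_eq_getElem (show i * s + j < S.length by omega)]
    simp
  · rw [obsC_S _ _ _ _ _ (show (SH s ⟨i, hi⟩).val < s from hi), obsC_T,
      if_neg (by show ¬ (j < j); omega), if_pos rfl]
    exact heq

/-- The invariant is preserved by one step of the automaton. -/
lemma inv_step (cfg) (h : Inv S T cfg) :
    Inv S T ((myAuto n s hn hs).step S T cfg) := by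
  obtain ⟨hs1, hsn⟩ := s_le_n hn hs
  rcases h with ⟨c, rfl⟩ | ⟨j, u, hj, hu, rfl, hnm⟩ | ⟨v, hv, rfl, hnm⟩ | ⟨⟨b, hb⟩, hm⟩
  · -- setup
    rw [step_setup hn hs S T hS hT c.isLt]
    by_cases h1 : c.val + 1 < n - s
    · rw [dif_pos h1]
      exact Or.inl ⟨⟨c.val + 1, h1⟩, rfl⟩
    · rw [dif_neg h1]
      have h2 : c.val + 1 = n - s := by have := c.isLt; omega
      rw [h2, posD1_top hs]
      refine Or.inr (Or.inl ⟨0, 0, hs1, by omega, rfl, ?_⟩)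
      intro i jj p' _ _ _ hcond
      omega
  · -- main phase
    by_cases hm : matchB n s (obs S T (posC n s j u)) = true
    · rw [stC, step_freeze hn hs S T hS hT _ _ hm]
      exact Or.inr (Or.inr (Or.inr ⟨⟨_, rfl⟩, hm⟩))
    · rw [Bool.not_eq_true] at hm
      by_cases hu' : u < n
      · rw [step_C_sweep hn hs S T hS hT hj hu' hm]
        refine Or.inr (Or.inl ⟨j, u + 1, hj, by omega, rfl, ?_⟩)
        intro i jj p' hi hjj hp' hcond
        rcases hcond with h1 | ⟨rfl, h2⟩
        · exact hnm i jj p' hi hjj hp' (Or.inl h1)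
        · rcases Nat.lt_or_ge p' u with h3 | h3
          · exact hnm i jj p' hi hjj hp' (Or.inr ⟨rfl, h3⟩)
          · have : p' = u := by omega
            subst this
            exact new_pair hs S T hS hjj hp' hm i hi
      · have hun : u = n := by omega
        subst hun
        by_cases hj' : j + 1 < s
        · rw [step_C_next hn hs S T hS hT hj' hm]
          refine Or.inr (Or.inl ⟨j + 1, 0, hj', by omega, rfl, ?_⟩)
          intro i jj p' hi hjj hp' hcond
          apply hnm i jj p' hi hjj hp'
          omega
        · have hj1 : j = s - 1 := by omega
          subst hj1
          rw [step_C_last hn hs S T hS hT hs1]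
          refine Or.inr (Or.inr (Or.inl ⟨1, le_refl 1, rfl, ?_⟩))
          intro i jj p' hi hjj hp' hcond
          apply hnm i jj p' hi hjj hp'
          omega
  · -- final sweep
    by_cases hd : Done S T (posF n s v)
    · rw [step_done S T _ _ hd]
      exact Or.inr (Or.inr (Or.inl ⟨v, hv, rfl, hnm⟩))
    · have hlt : s - 1 + v < n := by
        rw [done_iff S T hS hT] at hd
        push_neg at hd
        obtain ⟨idx, hidx⟩ := hd
        rw [posF] at hidx
        by_cases h1 : idx.val < s
        · rw [if_pos h1] at hidx
          have : (0:ℕ) ≤ idx.val * s := Nat.zero_le _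
          omega
        · rw [if_neg h1] at hidx
          omega
      rw [step_F hn hs S T hS hT hlt]
      exact Or.inr (Or.inr (Or.inl ⟨v + 1, by omega, rfl, hnm⟩))
  · -- frozen
    obtain ⟨q, pos⟩ := cfg
    simp only at hb
    subst hb
    rw [step_freeze hn hs S T hS hT _ _ hm]
    exact Or.inr (Or.inr (Or.inr ⟨⟨b, rfl⟩, hm⟩))

lemma inv_run (t : ℕ) : Inv S T ((myAuto n s hn hs).run S T t) := by
  induction t with
  | zero =>
      rw [MP2S.run, Function.iterate_zero_apply]
      obtain ⟨hs1, hsn⟩ := s_le_n hn hs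
      rw [start_eval]
      by_cases h0 : 0 < n - s
      · rw [dif_pos h0]
        exact Or.inl ⟨⟨0, h0⟩, by rw [posD1_zero]⟩
      · rw [dif_neg h0]
        have h1 : s = 1 := by
          have hss : n = s * s := by rw [hs]; ring
          have : n = s := by omega
          have : s * s = s * 1 := by omega
          exact Nat.eq_of_mul_eq_mul_left hs1 this
        refine Or.inr (Or.inl ⟨0, 0, hs1, by omega, ?_, ?_⟩)
        · rw [posC_zero_of_s_eq_one h1 (by omega)]
          rfl
        · intro i jj p' _ _ _ hcond
          omega
  | succ t ih =>
      rw [run_succ]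
      exact inv_step hn hs S T hS hT _ ih

/-- Direction 2: if the automaton accepts, the streams are disjoint. -/
lemma accepts_disjoint (hacc : (myAuto n s hn hs).Accepts S T) :
    ∀ x ∈ S, x ∉ T := by
  obtain ⟨hs1, hsn⟩ := s_le_n hn hs
  obtain ⟨t, hdone, -⟩ := hacc
  have hinv := inv_run hn hs S T hS hT t
  set cfg := (myAuto n s hn hs).run S T t with hcfg
  rcases hinv with ⟨c, hc⟩ | ⟨j, u, hj, hu, hc, hnm⟩ | ⟨v, hv, hc, hnm⟩ | ⟨_, hm⟩
  · exfalso
    rw [hc] at hdone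
    rw [done_iff S T hS hT] at hdone
    have := hdone (TH s ⟨0, hs1⟩)
    replace this : n ≤ posD1 s c.val (TH s ⟨0, hs1⟩) := this
    rw [posD1, if_neg (by show ¬ ((TH s ⟨0, hs1⟩).val < s); simp [TH])] at this
    omega
  · exfalso
    rw [hc] at hdone
    rw [done_iff S T hS hT] at hdone
    have := hdone (SH s ⟨0, hs1⟩)
    replace this : n ≤ posC n s j u (SH s ⟨0, hs1⟩) := this
    rw [posC, if_pos (by show (0:ℕ) < s; omega)] at this
    simp only [SH, Nat.zero_mul, Nat.zero_add] at this
    omega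
  · -- done in final sweep: conclude disjointness
    intro x hxS hxT
    obtain ⟨p, hp, hpx⟩ := List.mem_iff_getElem.mp hxS
    obtain ⟨p', hp', hpx'⟩ := List.mem_iff_getElem.mp hxT
    rw [hS] at hp
    rw [hT] at hp'
    have hss : n = s * s := by rw [hs]; ring
    have hdiv : p / s < s := by
      rw [Nat.div_lt_iff_lt_mul (by omega)]
      omega
    have hmod : p % s < s := Nat.mod_lt _ (by omega)
    have heq : p / s * s + p % s = p := by
      rw [Nat.mul_comm]
      exact Nat.div_add_mod p s
    have := hnm (p / s) (p % s) p' hdiv hmod hp' (Or.inl hmod)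
    rw [heq] at this
    apply this
    rw [List.getElem?_eq_getElem (by omega), List.getElem?_eq_getElem (by omega)]
    rw [hpx, hpx']
  · exfalso
    exact matchB_true_notDone S T hS hT _ hm hdone

end Proofs6
end DisjAux

/-- For every integer `n ≥ 1` that is a perfect square, say `n = s^2`,
the set disjointness problem `Disj_n` can be solved by an mp2s-automaton over `D_n` with
`n + 2 - √n` states, `√n = s` forward heads on each of the two input streams, and no
backward heads. -/
theorem disj_solvable_sqrt_heads_fewer_states (n s : ℕ) (hn : 1 ≤ n) (hs : n = s ^ 2) :
    ∃ A : MP2S (MP2S.Dn n) (n + 2 - s) s 0, MP2S.SolvesDisj n A := by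
  refine ⟨DisjAux.myAuto n s hn hs, ?_⟩
  intro S T hS hT
  exact ⟨fun h => DisjAux.accepts_disjoint hn hs S T hS hT h,
    fun h => DisjAux.disjoint_accepts hn hs S T hS hT h⟩
end

section
/- Let n, m, k_f be positive integers and set k = 2·k_f and v = k_f² + 1. If k²·v·log₂(n+1) + k·v·log₂ m + v·(1 + log₂ v) ≤ n, then the set disjointness problem Disj_n cannot be solved by any mp2s-automaton with parameters (D_n, m, k_f, 0), i.e., by any mp2s-automaton over the data set D_n with m states, k_f forward heads on each of the two input streams, and no backward heads. -/
section Generic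

namespace MP2S

variable {D : Type} {m kf : ℕ}

lemma streamOf_eq (S T : List D) (i : Fin (2*kf + 2*0)) :
    streamOf S T i = if i.val < kf then S else T := by
  unfold streamOf
  by_cases h : i.val < kf
  · simp [h]
  · have h2 : ¬ (i.val < kf ∨ (2*kf ≤ i.val ∧ i.val < 2*kf + 0)) := by omega
    simp only [if_neg h2, if_neg h]

lemma obs_eq (S T : List D) (pos : Fin (2*kf + 2*0) → ℕ) (i : Fin (2*kf + 2*0)) :
    obs S T pos i = (streamOf S T i)[pos i]? := by
  unfold obs
  have hi : i.val < 2*kf := by have := i.isLt; omega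
  by_cases h : pos i < (streamOf S T i).length
  · simp [h, hi]
  · simp only [if_neg h]
    exact (List.getElem?_eq_none (by omega)).symm

variable (A : MP2S D m kf 0)

lemma run_succ (S T : List D) (t : ℕ) :
    A.run S T (t+1) = A.step S T (A.run S T t) := by
  unfold run
  rw [Function.iterate_succ_apply']

lemma pos_le_length (S T : List D) (t : ℕ) (i : Fin (2*kf + 2*0)) :
    (A.run S T t).2 i ≤ (streamOf S T i).length := by
  induction t with
  | zero => simp [run]
  | succ t ih =>
    rw [run_succ]
    unfold step
    by_cases h : Done S T (A.run S T t).2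
    · simpa [h] using ih
    · simp only [if_neg h]
      by_cases hb : (A.δ (A.run S T t).1 (obs S T (A.run S T t).2)).2 i
      · simp [hb]
      · simpa [hb] using ih

lemma pos_succ_mono (S T : List D) (t : ℕ) (i : Fin (2*kf + 2*0)) :
    (A.run S T t).2 i ≤ (A.run S T (t+1)).2 i := by
  have hle := A.pos_le_length S T t i
  rw [run_succ]
  unfold step
  by_cases h : Done S T (A.run S T t).2
  · simp [h]
  · simp only [if_neg h]
    by_cases hb : (A.δ (A.run S T t).1 (obs S T (A.run S T t).2)).2 i
    · simp only [hb, if_true]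
      omega
    · simp [hb]

lemma pos_mono (S T : List D) {s t : ℕ} (h : s ≤ t) (i : Fin (2*kf + 2*0)) :
    (A.run S T s).2 i ≤ (A.run S T t).2 i := by
  induction t with
  | zero => have : s = 0 := by omega
            subst this; exact le_rfl
  | succ t ih =>
    rcases Nat.lt_or_ge s (t+1) with hl | hl
    · exact le_trans (ih (by omega)) (A.pos_succ_mono S T t i)
    · have : s = t+1 := by omega
      subst this; exact le_rfl

lemma pos_succ_le (S T : List D) (t : ℕ) (i : Fin (2*kf + 2*0)) :
    (A.run S T (t+1)).2 i ≤ (A.run S T t).2 i + 1 := by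
  rw [run_succ]
  unfold step
  by_cases h : Done S T (A.run S T t).2
  · simp [h]
  · simp only [if_neg h]
    by_cases hb : (A.δ (A.run S T t).1 (obs S T (A.run S T t).2)).2 i
    · simp only [hb, if_true]; omega
    · simp [hb]

lemma run_stable (S T : List D) {d : ℕ} (hd : Done S T (A.run S T d).2) :
    ∀ s, d ≤ s → A.run S T s = A.run S T d := by
  intro s hs
  induction s with
  | zero => have : d = 0 := by omega
            subst this; rfl
  | succ s ih =>
    rcases Nat.lt_or_ge d (s+1) with hl | hl
    · have hs' : A.run S T s = A.run S T d := ih (by omega)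
      rw [run_succ, hs']
      unfold step
      simp [hd]
    · have : d = s+1 := by omega
      subst this; rfl

lemma step_congr (U V S' T' : List D)
    (hlen : ∀ i : Fin (2*kf + 2*0), (streamOf U V i).length = (streamOf S' T' i).length)
    (c : A.Q × (Fin (2*kf + 2*0) → ℕ))
    (hobs : ∀ i, obs U V c.2 i = obs S' T' c.2 i) :
    A.step U V c = A.step S' T' c := by
  have hdone : Done U V c.2 ↔ Done S' T' c.2 := by
    unfold Done
    constructor <;> intro hd i <;> [rw [← hlen i]; rw [hlen i]] <;> exact hd i
  have hobs' : obs U V c.2 = obs S' T' c.2 := funext hobs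
  unfold step
  by_cases h : Done U V c.2
  · rw [if_pos h, if_pos (hdone.mp h)]
  · rw [if_neg h, if_neg (fun hh => h (hdone.mpr hh))]
    simp only [hobs']
    congr 1
    funext i
    rw [hlen i]

end MP2S

end Generic

namespace MP2S
lemma streamOf_length {D : Type} {kf : ℕ} {nn : ℕ} (S T : List D)
    (hS : S.length = nn) (hT : T.length = nn) (i : Fin (2*kf+2*0)) :
    (streamOf S T i).length = nn := by
  rw [streamOf_eq]
  by_cases h : i.val < kf <;> simp [h, hS, hT]
end MP2S
section Blocks

namespace DisjProof

/-- start of block `j` -/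
def blockStart (b j : ℕ) : ℕ := j * b

/-- end of block `j` (the last of `v` blocks extends to `n`) -/
def blockEnd (n v b j : ℕ) : ℕ := if j + 1 = v then n else (j+1) * b

/-- which block a position belongs to -/
def blockOf (v b i : ℕ) : ℕ := min (i / b) (v - 1)

lemma blockOf_lt {v : ℕ} (hv : 1 ≤ v) (b i : ℕ) : blockOf v b i < v := by
  unfold blockOf; omega

lemma blockEnd_le {n v b : ℕ} (hvb : v * b ≤ n) {j : ℕ} (hj : j < v) :
    blockEnd n v b j ≤ n := by
  unfold blockEnd
  by_cases h : j + 1 = v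
  · simp [h]
  · rw [if_neg h]
    calc (j+1) * b ≤ v * b := Nat.mul_le_mul_right b (by omega)
    _ ≤ n := hvb

lemma blockStart_lt_blockEnd {n v b : ℕ} (hb : 1 ≤ b) (hvb : v * b ≤ n)
    {j : ℕ} (hj : j < v) :
    blockStart b j < blockEnd n v b j := by
  unfold blockStart blockEnd
  have hmul : j * b < (j+1) * b := by
    have : j * b + b ≤ (j+1)*b := by rw [Nat.succ_mul]
    omega
  by_cases h : j + 1 = v
  · rw [if_pos h]
    have : (j+1) * b ≤ v * b := by rw [h]
    omega
  · rw [if_neg h]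
    exact hmul

lemma blockEnd_le_blockStart {n v b : ℕ} {j j' : ℕ} (hjj : j < j') (hj' : j' < v) :
    blockEnd n v b j ≤ blockStart b j' := by
  unfold blockEnd blockStart
  have h : j + 1 ≠ v := by omega
  rw [if_neg h]
  exact Nat.mul_le_mul_right b (by omega)

lemma blockOf_eq_iff {n v b : ℕ} (hb : 1 ≤ b) {i j : ℕ} (hi : i < n) (hj : j < v) :
    blockOf v b i = j ↔ (blockStart b j ≤ i ∧ i < blockEnd n v b j) := by
  unfold blockOf blockStart blockEnd
  have h1 : j ≤ i / b ↔ j * b ≤ i := Nat.le_div_iff_mul_le hb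
  by_cases h : j + 1 = v
  · rw [if_pos h]
    constructor
    · intro he
      have : j ≤ i / b := by omega
      exact ⟨h1.mp this, hi⟩
    · intro ⟨h2, _⟩
      have := h1.mpr h2
      omega
  · rw [if_neg h]
    have h2 : i / b < j + 1 ↔ i < (j+1) * b := Nat.div_lt_iff_lt_mul hb
    constructor
    · intro he
      have ha : j ≤ i / b ∧ i / b < j + 1 := by omega
      exact ⟨h1.mp ha.1, h2.mp ha.2⟩
    · intro ⟨ha, hb'⟩
      have := h1.mpr ha
      have := h2.mpr hb'
      omega

end DisjProof

end Blocks

namespace DisjProof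
lemma blockStart_add_le {n v b : ℕ} (hvb : v * b ≤ n) {j : ℕ} (hj : j < v) :
    blockStart b j + b ≤ blockEnd n v b j := by
  unfold blockStart blockEnd
  by_cases h : j + 1 = v
  · rw [if_pos h]
    have : (j+1) * b ≤ v * b := Nat.mul_le_mul_right b (by omega)
    have he : (j+1) * b = j * b + b := by ring
    omega
  · rw [if_neg h]
    have he : (j+1) * b = j * b + b := by ring
    omega
end DisjProof
section Splice

namespace DisjProof

open MP2S

variable {D : Type} {m kf : ℕ}

/-- set of heads that have already entered their territory -/
def Ent (lo pos : Fin (2*kf+2*0) → ℕ) : Finset (Fin (2*kf+2*0)) :=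
  Finset.univ.filter (fun h => lo h ≤ pos h)

lemma Ent_mono (lo : Fin (2*kf+2*0) → ℕ) {p q : Fin (2*kf+2*0) → ℕ}
    (h : ∀ i, p i ≤ q i) : Ent lo p ⊆ Ent lo q := by
  intro x hx
  simp only [Ent, Finset.mem_filter, Finset.mem_univ, true_and] at hx ⊢
  have := h x
  omega

/-- consistency : all heads on the dangerous side for mode `μ` are outside
their territory -/
def Cons (sid : Fin (2*kf+2*0) → Bool) (lo hi : Fin (2*kf+2*0) → ℕ) (μ : Bool)
    (pos : Fin (2*kf+2*0) → ℕ) : Prop :=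
  ∀ h, sid h = μ → (pos h < lo h ∨ hi h ≤ pos h)

/-- termination measure for the splicing induction -/
def meas (A : MP2S D m kf 0) (R : Bool → List D × List D)
    (lo : Fin (2*kf+2*0) → ℕ) (d : Bool → ℕ) (μ : Bool) (s : ℕ) : ℕ :=
  (2*kf+2*0 - (Ent lo (A.run (R μ).1 (R μ).2 s).2).card) * (d false + d true + 1)
    + (d μ - s)

/-- The splicing lemma: if two accepting runs have equal configurations at all the
territory-entry events, and the mixed input agrees with the respective original input
everywhere except that dangerous-side heads may see different data inside their
territory, then the mixed input is accepted. -/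
lemma splice (A : MP2S D m kf 0) (nn : ℕ) (U V : List D)
    (R : Bool → List D × List D)
    (sid : Fin (2*kf+2*0) → Bool) (lo hi : Fin (2*kf+2*0) → ℕ)
    (d : Bool → ℕ) (e : Bool → Fin (2*kf+2*0) → ℕ)
    (hlenU : U.length = nn) (hlenV : V.length = nn)
    (hlenR1 : ∀ μ, (R μ).1.length = nn) (hlenR2 : ∀ μ, (R μ).2.length = nn)
    (hlohi : ∀ h, lo h < hi h)
    (hd : ∀ μ, Done (R μ).1 (R μ).2 (A.run (R μ).1 (R μ).2 (d μ)).2 ∧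
      (A.run (R μ).1 (R μ).2 (d μ)).1 ∈ A.accept)
    (hagree1 : ∀ (μ : Bool) h, sid h ≠ μ →
      streamOf U V h = streamOf (R μ).1 (R μ).2 h)
    (hagree2 : ∀ (μ : Bool) h (p : ℕ), sid h = μ → (p < lo h ∨ hi h ≤ p) →
      (streamOf U V h)[p]? = (streamOf (R μ).1 (R μ).2 h)[p]?)
    (huncov : ∀ (μ : Bool) (t : ℕ) (g g' : Fin (2*kf+2*0)), sid g ≠ sid g' →
      lo g ≤ (A.run (R μ).1 (R μ).2 t).2 g → (A.run (R μ).1 (R μ).2 t).2 g < hi g →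
      lo g' ≤ (A.run (R μ).1 (R μ).2 t).2 g' → (A.run (R μ).1 (R μ).2 t).2 g' < hi g' →
      False)
    (he1 : ∀ μ h, lo h ≤ (A.run (R μ).1 (R μ).2 (e μ h)).2 h)
    (he2 : ∀ μ h t, t < e μ h → (A.run (R μ).1 (R μ).2 t).2 h < lo h)
    (hsk : ∀ h, A.run (R false).1 (R false).2 (e false h)
      = A.run (R true).1 (R true).2 (e true h))
    (hinit : ∃ μ0, ∀ h, sid h = μ0 → 0 < lo h) :
    A.Accepts U V := by
  -- length facts
  have hlen' : ∀ (S T : List D), S.length = nn → T.length = nn →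
      ∀ i : Fin (2*kf+2*0), (streamOf S T i).length = nn := by
    intro S T hS hT i
    rw [streamOf_eq]
    by_cases h : i.val < kf <;> simp [h, hS, hT]
  have hlenUV := hlen' U V hlenU hlenV
  have hlenRμ : ∀ μ (i : Fin (2*kf+2*0)),
      (streamOf (R μ).1 (R μ).2 i).length = nn :=
    fun μ => hlen' (R μ).1 (R μ).2 (hlenR1 μ) (hlenR2 μ)
  -- the mimicking step
  have hmimic : ∀ (μ : Bool) (c : A.Q × (Fin (2*kf+2*0) → ℕ)),
      Cons sid lo hi μ c.2 → A.step U V c = A.step (R μ).1 (R μ).2 c := by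
    intro μ c hcons
    apply A.step_congr
    · intro i; rw [hlenUV i, hlenRμ μ i]
    · intro i
      rw [obs_eq, obs_eq]
      by_cases hs : sid i = μ
      · exact hagree2 μ i (c.2 i) hs (hcons i hs)
      · rw [hagree1 μ i hs]
  -- the main induction
  have key : ∀ (N : ℕ) (μ : Bool) (s t : ℕ), meas A R lo d μ s ≤ N →
      A.run U V t = A.run (R μ).1 (R μ).2 s →
      Cons sid lo hi μ (A.run (R μ).1 (R μ).2 s).2 →
      ∃ t', Done U V (A.run U V t').2 ∧ (A.run U V t').1 ∈ A.accept := by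
    intro N
    induction N with
    | zero =>
      intro μ s t hm hrun hcons
      by_cases hds : d μ ≤ s
      · refine ⟨t, ?_, ?_⟩
        · rw [hrun, A.run_stable (R μ).1 (R μ).2 (hd μ).1 s hds]
          intro i
          rw [hlenUV i]
          have := (hd μ).1 i
          rw [hlenRμ μ i] at this
          exact this
        · rw [hrun, A.run_stable (R μ).1 (R μ).2 (hd μ).1 s hds]
          exact (hd μ).2
      · exfalso
        have : d μ - s ≥ 1 := by omega
        have := hm
        unfold meas at this
        omega
    | succ N ih =>
      intro μ s t hm hrun hcons
      by_cases hds : d μ ≤ s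
      · refine ⟨t, ?_, ?_⟩
        · rw [hrun, A.run_stable (R μ).1 (R μ).2 (hd μ).1 s hds]
          intro i
          rw [hlenUV i]
          have := (hd μ).1 i
          rw [hlenRμ μ i] at this
          exact this
        · rw [hrun, A.run_stable (R μ).1 (R μ).2 (hd μ).1 s hds]
          exact (hd μ).2
      -- we can take one more step
      · have hstep : A.run U V (t+1) = A.run (R μ).1 (R μ).2 (s+1) := by
          rw [A.run_succ, hrun, hmimic μ _ hcons, ← A.run_succ]
        have hEmono : Ent lo (A.run (R μ).1 (R μ).2 s).2
            ⊆ Ent lo (A.run (R μ).1 (R μ).2 (s+1)).2 :=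
          Ent_mono lo (fun i => A.pos_succ_mono (R μ).1 (R μ).2 s i)
        by_cases hc2 : Cons sid lo hi μ (A.run (R μ).1 (R μ).2 (s+1)).2
        · refine ih μ (s+1) (t+1) ?_ hstep hc2
          have hcard := Finset.card_le_card hEmono
          have h1 : meas A R lo d μ (s+1) ≤ meas A R lo d μ s - 1 := by
            unfold meas
            have h2 : (2*kf+2*0 - (Ent lo (A.run (R μ).1 (R μ).2 (s+1)).2).card)
                  * (d false + d true + 1)
                ≤ (2*kf+2*0 - (Ent lo (A.run (R μ).1 (R μ).2 s).2).card)
                  * (d false + d true + 1) :=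
              Nat.mul_le_mul_right _ (by omega)
            omega
          omega
        -- a dangerous head newly entered its territory : switch runs
        · have hviol : ∃ g, sid g = μ ∧ lo g ≤ (A.run (R μ).1 (R μ).2 (s+1)).2 g ∧
              (A.run (R μ).1 (R μ).2 (s+1)).2 g < hi g := by
            unfold Cons at hc2
            push_neg at hc2
            obtain ⟨g, hg1, hg2, hg3⟩ := hc2
            exact ⟨g, hg1, by omega, hg3⟩
          obtain ⟨g, hgsid, hgin1, hgin2⟩ := hviol
          have hglt : (A.run (R μ).1 (R μ).2 s).2 g < lo g := by
            rcases hcons g hgsid with h | h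
            · exact h
            · exfalso
              have := A.pos_succ_mono (R μ).1 (R μ).2 s g
              omega
          have heg : e μ g = s + 1 := by
            have hle : e μ g ≤ s + 1 := by
              by_contra hcon
              have := he2 μ g (s+1) (by omega)
              omega
            have hgt : ¬ e μ g ≤ s := by
              intro hcon
              have h1 := he1 μ g
              have h2 := A.pos_mono (R μ).1 (R μ).2 hcon g
              omega
            omega
          have hswap : A.run (R μ).1 (R μ).2 (s+1)
              = A.run (R (!μ)).1 (R (!μ)).2 (e (!μ) g) := by
            cases μ
            · rw [← heg]; exact hsk g
            · rw [← heg]; exact (hsk g).symm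
          have hcons' : Cons sid lo hi (!μ) (A.run (R (!μ)).1 (R (!μ)).2 (e (!μ) g)).2 := by
            intro h hsidh
            by_contra hcon
            push_neg at hcon
            obtain ⟨hh1, hh2⟩ := hcon
            refine huncov (!μ) (e (!μ) g) h g ?_ hh1 hh2 ?_ ?_
            · rw [hsidh, hgsid]; cases μ <;> simp
            · rw [← hswap]; exact hgin1
            · rw [← hswap]; exact hgin2
          -- measure decreases enough
          have hgnot : g ∉ Ent lo (A.run (R μ).1 (R μ).2 s).2 := by
            simp only [Ent, Finset.mem_filter, Finset.mem_univ, true_and]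
            omega
          have hgmem : g ∈ Ent lo (A.run (R μ).1 (R μ).2 (s+1)).2 := by
            simp only [Ent, Finset.mem_filter, Finset.mem_univ, true_and]
            exact hgin1
          have hcard : (Ent lo (A.run (R μ).1 (R μ).2 s).2).card
              < (Ent lo (A.run (R μ).1 (R μ).2 (s+1)).2).card :=
            Finset.card_lt_card (Finset.ssubset_iff_of_subset hEmono |>.mpr
              ⟨g, hgmem, hgnot⟩)
          have hcardK : (Ent lo (A.run (R μ).1 (R μ).2 (s+1)).2).card ≤ 2*kf+2*0 := by
            have := Finset.card_le_univ (Ent lo (A.run (R μ).1 (R μ).2 (s+1)).2)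
            simpa using this
          have hmeas' : meas A R lo d (!μ) (e (!μ) g) ≤ N := by
            unfold meas at hm ⊢
            rw [← hswap]
            set B := d false + d true + 1 with hB
            set a := (Ent lo (A.run (R μ).1 (R μ).2 s).2).card with ha
            set a' := (Ent lo (A.run (R μ).1 (R μ).2 (s+1)).2).card with ha'
            have hd' : d (!μ) - e (!μ) g ≤ B - 1 := by
              have : d (!μ) ≤ d false + d true := by
                cases μ <;> simp only [Bool.not_false, Bool.not_true] <;> omega
              omega
            have hKa : 1 ≤ 2*kf+2*0 - a := by omega
            obtain ⟨c, hc⟩ : ∃ c, 2*kf+2*0 - a = c + 1 := ⟨2*kf+2*0 - a - 1, by omega⟩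
            have hstep1 : (2*kf+2*0 - a') * B + (B - 1) < (2*kf+2*0 - a) * B := by
              have h1 : (2*kf+2*0 - a') ≤ c := by omega
              have h2 : (2*kf+2*0 - a') * B ≤ c * B :=
                Nat.mul_le_mul_right _ h1
              have h3 : c * B + B = (2*kf+2*0 - a) * B := by
                rw [hc, Nat.succ_mul]
              omega
            have h6 : (2*kf+2*0 - a) * B + 1 ≤ (2*kf+2*0 - a) * B + (d μ - s) :=
              Nat.add_le_add_left (by omega) _
            have hmub : (2*kf+2*0 - a) * B ≤ N :=
              Nat.le_of_succ_le_succ (le_trans h6 hm)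
            apply le_of_lt
            calc (2*kf+2*0 - a') * B + (d (!μ) - e (!μ) g)
                ≤ (2*kf+2*0 - a') * B + (B - 1) := Nat.add_le_add_left hd' _
              _ < (2*kf+2*0 - a) * B := hstep1
              _ ≤ N := hmub

          exact ih (!μ) (e (!μ) g) (t+1) hmeas' (hstep.trans hswap) hcons'
  -- start the induction
  obtain ⟨μ0, hμ0⟩ := hinit
  have hrun0 : A.run U V 0 = A.run (R μ0).1 (R μ0).2 0 := rfl
  have hcons0 : Cons sid lo hi μ0 (A.run (R μ0).1 (R μ0).2 0).2 := by
    intro h hs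
    left
    have h0 : (A.run (R μ0).1 (R μ0).2 0).2 h = 0 := rfl
    rw [h0]
    exact hμ0 h hs
  exact key (meas A R lo d μ0 0) μ0 0 0 le_rfl hrun0 hcons0

end DisjProof

end Splice
section Inputs

namespace DisjProof

open MP2S

/-- reversal permutation of `Fin n` -/
def rev {n : ℕ} (p : Fin n) : Fin n := ⟨n - 1 - p.val, by omega⟩

lemma rev_rev {n : ℕ} (p : Fin n) : rev (rev p) = p := by
  unfold rev
  have := p.isLt
  ext
  simp
  omega

/-- the first input stream determined by `X` -/
def SX (n : ℕ) (X : Fin n → Bool) : List (Dn n) := List.ofFn (fun i => (i, X i))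

/-- the second input stream determined by `X` : the items in block-reversed order,
with opposite labels -/
def TX (n : ℕ) (X : Fin n → Bool) : List (Dn n) :=
  List.ofFn (fun p => (rev p, !X (rev p)))

@[simp] lemma SX_length (n : ℕ) (X : Fin n → Bool) : (SX n X).length = n := by
  simp [SX]

@[simp] lemma TX_length (n : ℕ) (X : Fin n → Bool) : (TX n X).length = n := by
  simp [TX]

lemma SX_getElem? (n : ℕ) (X : Fin n → Bool) (p : ℕ) :
    (SX n X)[p]? = if h : p < n then some (⟨p, h⟩, X ⟨p, h⟩) else none := by
  by_cases h : p < n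
  · rw [dif_pos h, List.getElem?_eq_getElem (by simpa using h)]
    simp [SX]
  · rw [dif_neg h, List.getElem?_eq_none (by simpa using Nat.le_of_not_lt h)]

lemma TX_getElem? (n : ℕ) (X : Fin n → Bool) (p : ℕ) :
    (TX n X)[p]? = if h : p < n then
      some (rev ⟨p, h⟩, !X (rev ⟨p, h⟩)) else none := by
  by_cases h : p < n
  · rw [dif_pos h, List.getElem?_eq_getElem (by simpa using h)]
    simp [TX]
  · rw [dif_neg h, List.getElem?_eq_none (by simpa using Nat.le_of_not_lt h)]

lemma mem_SX {n : ℕ} {X : Fin n → Bool} {x : Dn n} :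
    x ∈ SX n X ↔ ∃ i, x = (i, X i) := by
  simp only [SX, List.mem_ofFn, Set.mem_range]
  exact ⟨fun ⟨i, hi⟩ => ⟨i, hi.symm⟩, fun ⟨i, hi⟩ => ⟨i, hi.symm⟩⟩

lemma mem_TX {n : ℕ} {X : Fin n → Bool} {x : Dn n} :
    x ∈ TX n X ↔ ∃ i, x = (i, !X i) := by
  simp only [TX, List.mem_ofFn, Set.mem_range]
  constructor
  · rintro ⟨p, hp⟩
    exact ⟨rev p, hp.symm⟩
  · rintro ⟨i, hi⟩
    exact ⟨rev i, by rw [rev_rev, hi]⟩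

lemma diag_disjoint (n : ℕ) (X : Fin n → Bool) : ∀ x ∈ SX n X, x ∉ TX n X := by
  intro x hx hx'
  rw [mem_SX] at hx
  rw [mem_TX] at hx'
  obtain ⟨i, rfl⟩ := hx
  obtain ⟨i', hi'⟩ := hx'
  have h1 : i = i' := congrArg Prod.fst hi'
  subst h1
  have h2 : X i = !X i := congrArg Prod.snd hi'
  simp at h2

/-- per-head territory bounds for block `j` : lower bound -/
def loH (n v b j kf : ℕ) (h : Fin (2*kf+2*0)) : ℕ :=
  if h.val < kf then blockStart b j else n - blockEnd n v b j

/-- per-head territory bounds for block `j` : upper bound -/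
def hiH (n v b j kf : ℕ) (h : Fin (2*kf+2*0)) : ℕ :=
  if h.val < kf then blockEnd n v b j else n - blockStart b j

lemma loH_S {n v b j kf : ℕ} {h : Fin (2*kf+2*0)} (hg : h.val < kf) :
    loH n v b j kf h = blockStart b j := by simp [loH, hg]

lemma loH_T {n v b j kf : ℕ} {h : Fin (2*kf+2*0)} (hg : ¬ h.val < kf) :
    loH n v b j kf h = n - blockEnd n v b j := by simp [loH, hg]

lemma hiH_S {n v b j kf : ℕ} {h : Fin (2*kf+2*0)} (hg : h.val < kf) :
    hiH n v b j kf h = blockEnd n v b j := by simp [hiH, hg]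

lemma hiH_T {n v b j kf : ℕ} {h : Fin (2*kf+2*0)} (hg : ¬ h.val < kf) :
    hiH n v b j kf h = n - blockStart b j := by simp [hiH, hg]

/-- the pair of heads `(g, g')` scans block `j` on both streams simultaneously
at some time during the given run -/
def PairCov {D : Type} {m kf : ℕ} (A : MP2S D m kf 0) (S T : List D)
    (n v b j : ℕ) (g g' : Fin (2*kf+2*0)) : Prop :=
  ∃ t : ℕ,
    loH n v b j kf g ≤ (A.run S T t).2 g ∧ (A.run S T t).2 g < hiH n v b j kf g ∧
    loH n v b j kf g' ≤ (A.run S T t).2 g' ∧ (A.run S T t).2 g' < hiH n v b j kf g'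

/-- a pair of opposite heads can cover at most one block -/
lemma pairCov_unique {D : Type} {m kf : ℕ} (A : MP2S D m kf 0) (S T : List D)
    {n v b : ℕ} (hb : 1 ≤ b) (hvb : v * b ≤ n)
    {j j' : ℕ} (hj : j < v) (hj' : j' < v)
    {g g' : Fin (2*kf+2*0)} (hg : g.val < kf) (hg' : ¬ g'.val < kf)
    (hc : PairCov A S T n v b j g g') (hc' : PairCov A S T n v b j' g g') :
    j = j' := by
  -- auxiliary: impossible for j < j'
  have main : ∀ j1 j2 : ℕ, j1 < v → j2 < v → j1 < j2 →
      PairCov A S T n v b j1 g g' → PairCov A S T n v b j2 g g' → False := by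
    intro j1 j2 h1 h2 h12 ⟨t1, hS1a, hS1b, hT1a, hT1b⟩ ⟨t2, hS2a, hS2b, hT2a, hT2b⟩
    rw [loH_S hg] at hS1a hS2a
    rw [hiH_S hg] at hS1b hS2b
    rw [loH_T hg'] at hT1a hT2a
    rw [hiH_T hg'] at hT1b hT2b
    have hES : blockEnd n v b j1 ≤ blockStart b j2 := blockEnd_le_blockStart h12 h2
    have hBE1 : blockStart b j1 < blockEnd n v b j1 := blockStart_lt_blockEnd hb hvb h1
    have hBE2 : blockStart b j2 < blockEnd n v b j2 := blockStart_lt_blockEnd hb hvb h2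
    have hE2 : blockEnd n v b j2 ≤ n := blockEnd_le hvb h2
    -- the S-head visits block j1 strictly before block j2
    have ht12 : t1 < t2 := by
      by_contra hcon
      have := A.pos_mono S T (Nat.le_of_not_lt hcon) g
      omega
    -- the T-head visits block j2 strictly before block j1
    have ht21 : t2 < t1 := by
      by_contra hcon
      have := A.pos_mono S T (Nat.le_of_not_lt hcon) g'
      omega
    omega
  rcases Nat.lt_trichotomy j j' with h | h | h
  · exact absurd (main j j' hj hj' h hc hc') (fun f => f)
  · exact h
  · exact absurd (main j' j hj' hj h hc' hc) (fun f => f)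

/-- there is a block not covered by any pair of opposite heads -/
lemma exists_uncovered {D : Type} {m kf : ℕ} (A : MP2S D m kf 0) (S T : List D)
    {n v b : ℕ} (hb : 1 ≤ b) (hvb : v * b ≤ n) (hkf : 1 ≤ kf) (hv : v = kf^2 + 1) :
    ∃ j < v, ∀ g g' : Fin (2*kf+2*0), g.val < kf → ¬ g'.val < kf →
      ¬ PairCov A S T n v b j g g' := by
  by_contra hcon
  push_neg at hcon
  -- choose a covering pair for each block
  have hch : ∀ j : Fin v, ∃ gg : Fin (2*kf+2*0) × Fin (2*kf+2*0),
      gg.1.val < kf ∧ ¬ gg.2.val < kf ∧ PairCov A S T n v b j.val gg.1 gg.2 := by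
    intro j
    obtain ⟨g, g', h1, h2, h3⟩ := hcon j.val j.isLt
    exact ⟨(g, g'), h1, by simp; omega, h3⟩
  choose f hf1 hf2 hf3 using hch
  -- map into Fin kf × Fin kf
  have hinj : Function.Injective
      (fun j : Fin v => ((⟨(f j).1.val, hf1 j⟩ : Fin kf),
        (⟨(f j).2.val - kf, by have := (f j).2.isLt; have := hf2 j; omega⟩ : Fin kf))) := by
    intro j j' heq
    simp only [Prod.mk.injEq, Fin.mk.injEq] at heq
    have hg : (f j).1 = (f j').1 := Fin.ext heq.1
    have hg' : (f j).2 = (f j').2 := by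
      have h2 := hf2 j
      have h2' := hf2 j'
      apply Fin.ext
      omega
    have hcov' : PairCov A S T n v b j'.val (f j).1 (f j).2 := by
      rw [hg, hg']
      exact hf3 j'
    have := pairCov_unique A S T hb hvb j.isLt j'.isLt (hf1 j) (hf2 j) (hf3 j) hcov'
    exact Fin.ext this
  have hcard := Fintype.card_le_of_injective _ hinj
  simp only [Fintype.card_fin, Fintype.card_prod] at hcard
  rw [hv] at hcard
  nlinarith [hcard]

end DisjProof

end Inputs
section Counting

namespace DisjProof

lemma counting {n m kf : ℕ} (hn : 1 ≤ n) (hm : 1 ≤ m) (hkf : 1 ≤ kf)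
    (h : (((2 * kf) ^ 2 * (kf ^ 2 + 1) : ℕ) : ℝ) * Real.logb 2 ((n : ℝ) + 1)
        + ((2 * kf * (kf ^ 2 + 1) : ℕ) : ℝ) * Real.logb 2 (m : ℝ)
        + ((kf ^ 2 + 1 : ℕ) : ℝ) * (1 + Real.logb 2 ((kf ^ 2 + 1 : ℕ) : ℝ)) ≤ (n : ℝ)) :
    (kf^2+1) ≤ n ∧
      (kf^2+1) * (m * (n+1)^(2*kf))^(2*kf) < 2^(n / (kf^2+1)) := by
  have h2 : (1:ℝ) < 2 := one_lt_two
  set L := Real.logb 2 ((n:ℝ)+1) with hLdef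
  set M := Real.logb 2 (m:ℝ) with hMdef
  set W := Real.logb 2 ((kf^2+1 : ℕ) : ℝ) with hWdef
  have hL : 0 ≤ L := Real.logb_nonneg h2 (by push_cast; linarith [Nat.cast_nonneg (α := ℝ) n])
  have hM : 0 ≤ M := Real.logb_nonneg h2 (by exact_mod_cast hm)
  have hW : 0 ≤ W := Real.logb_nonneg h2 (by exact_mod_cast Nat.one_le_iff_ne_zero.mpr (by positivity))
  push_cast at h
  have hv0r : (0:ℝ) < ((kf:ℝ)^2 + 1) := by positivity
  -- v ≤ n
  have hvnR : ((kf:ℝ)^2 + 1) ≤ (n:ℝ) := by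
    have t1 : 0 ≤ (2*(kf:ℝ))^2*((kf:ℝ)^2+1)*L := by positivity
    have t2 : 0 ≤ 2*(kf:ℝ)*((kf:ℝ)^2+1)*M := by positivity
    have t3 : ((kf:ℝ)^2+1) * 1 ≤ ((kf:ℝ)^2+1)*(1+W) :=
      mul_le_mul_of_nonneg_left (by linarith) (by positivity)
    nlinarith
  have hvn : kf^2 + 1 ≤ n := by exact_mod_cast hvnR
  refine ⟨hvn, ?_⟩
  set b := n / (kf^2+1) with hbdef
  have hv0 : 0 < kf^2 + 1 := by positivity
  -- n/v < b+1 over the reals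
  have hmod := Nat.div_add_mod n (kf^2+1)
  rw [← hbdef] at hmod
  have hmodlt := Nat.mod_lt n hv0
  have hexp : (kf^2+1) * (b+1) = (kf^2+1) * b + (kf^2+1) := by ring
  have hnltn : n < (kf^2+1) * (b+1) := by omega
  have hnvR : (n:ℝ) / ((kf:ℝ)^2+1) < (b:ℝ) + 1 := by
    rw [div_lt_iff₀ hv0r]
    have hc : ((n:ℝ)) < (((kf^2+1 : ℕ)):ℝ) * ((b:ℝ) + 1) := by
      have := hnltn
      push_cast
      exact_mod_cast this
    push_cast at hc
    linarith
  -- dividing the hypothesis by v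
  have hdiv : W + (2*(kf:ℝ))*M + (2*(kf:ℝ))^2*L + 1 ≤ (n:ℝ) / ((kf:ℝ)^2+1) := by
    rw [le_div_iff₀ hv0r]
    nlinarith
  -- the key logarithmic estimate
  have hposC : (0:ℝ) < (m:ℝ) * ((n:ℝ)+1)^(2*kf) := by positivity
  have hlogC : Real.logb 2 (((m:ℝ) * ((n:ℝ)+1)^(2*kf))^(2*kf))
      = (2*(kf:ℝ)) * (M + (2*(kf:ℝ)) * L) := by
    rw [Real.logb_pow, Real.logb_mul (by positivity) (by positivity), Real.logb_pow]
    push_cast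
    ring
  have hlog : Real.logb 2 ((((kf:ℝ)^2+1)) * ((m:ℝ) * ((n:ℝ)+1)^(2*kf))^(2*kf))
      < (b:ℝ) := by
    rw [Real.logb_mul (by positivity) (by positivity), hlogC]
    have hWW : Real.logb 2 ((kf:ℝ)^2+1) = W := by
      rw [hWdef]; norm_num
    rw [hWW]
    nlinarith
  have hlt : (((kf:ℝ)^2+1)) * ((m:ℝ) * ((n:ℝ)+1)^(2*kf))^(2*kf) < (2:ℝ)^(b:ℝ) :=
    (Real.logb_lt_iff_lt_rpow h2 (by positivity)).mp hlog
  rw [Real.rpow_natCast] at hlt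
  have : (((kf^2+1) * (m * (n+1)^(2*kf))^(2*kf) : ℕ) : ℝ) < (((2^b : ℕ)) : ℝ) := by
    push_cast
    convert hlt using 2
  exact_mod_cast this

end DisjProof

end Counting
section KeyType

namespace DisjProof

open MP2S

/-- the sketch type used for the pigeonhole argument -/
def KeyT {D : Type} {m kf : ℕ} (A : MP2S D m kf 0) (n v b : ℕ) : Type :=
  Σ j : Fin v, (Fin (2*kf+2*0) → A.Q × (Fin (2*kf+2*0) → Fin (n+1)))
    × ({i : Fin n // ¬ blockOf v b i.val = j.val} → Bool)

noncomputable instance {D : Type} {m kf : ℕ} (A : MP2S D m kf 0) (n v b : ℕ) :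
    Fintype (KeyT A n v b) := by
  unfold KeyT
  infer_instance

lemma card_masked {n v b : ℕ} (hb : 1 ≤ b) (hvb : v * b ≤ n) {j : ℕ} (hj : j < v) :
    Fintype.card ({i : Fin n // ¬ blockOf v b i.val = j} → Bool) ≤ 2^(n - b) := by
  rw [Fintype.card_fun, Fintype.card_bool]
  have hcompl : Fintype.card {i : Fin n // ¬ blockOf v b i.val = j}
      = n - Fintype.card {i : Fin n // blockOf v b i.val = j} := by
    rw [Fintype.card_subtype_compl, Fintype.card_fin]
  have hblk : b ≤ Fintype.card {i : Fin n // blockOf v b i.val = j} := by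
    have hlt1 : ∀ t : Fin b, blockStart b j + t.val < n := by
      intro t
      have h1 := blockStart_add_le hvb hj
      have h2 := blockEnd_le hvb hj
      have := t.isLt
      omega
    have hof : ∀ t : Fin b, blockOf v b (blockStart b j + t.val) = j := by
      intro t
      rw [blockOf_eq_iff hb (hlt1 t) hj]
      have h1 := blockStart_add_le hvb hj
      have := t.isLt
      omega
    have hinj2 : Function.Injective (fun t : Fin b =>
        (⟨⟨blockStart b j + t.val, hlt1 t⟩, hof t⟩ :
          {i : Fin n // blockOf v b i.val = j})) := by
      intro t t' htt
      have : blockStart b j + t.val = blockStart b j + t'.val := by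
        have := congrArg (fun x => x.val.val) htt
        simpa using this
      ext
      omega
    simpa using Fintype.card_le_of_injective _ hinj2
  rw [hcompl]
  exact Nat.pow_le_pow_right (by omega) (by omega)

lemma card_KeyT {D : Type} {m kf : ℕ} (A : MP2S D m kf 0) (n v b : ℕ)
    (hb : 1 ≤ b) (hvb : v * b ≤ n) :
    Fintype.card (KeyT A n v b)
      ≤ v * ((m * (n+1)^(2*kf+2*0))^(2*kf+2*0) * 2^(n - b)) := by
  unfold KeyT
  rw [Fintype.card_sigma]
  have hbound : ∀ j : Fin v,
      Fintype.card ((Fin (2*kf+2*0) → A.Q × (Fin (2*kf+2*0) → Fin (n+1)))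
        × ({i : Fin n // ¬ blockOf v b i.val = j.val} → Bool))
      ≤ (m * (n+1)^(2*kf+2*0))^(2*kf+2*0) * 2^(n - b) := by
    intro j
    rw [Fintype.card_prod]
    have hcfg : Fintype.card (Fin (2*kf+2*0) → A.Q × (Fin (2*kf+2*0) → Fin (n+1)))
        = (m * (n+1)^(2*kf+2*0))^(2*kf+2*0) := by
      rw [Fintype.card_fun, Fintype.card_prod, Fintype.card_fun, Fintype.card_fin,
        Fintype.card_fin, A.cardQ]
    rw [hcfg]
    exact Nat.mul_le_mul_left _ (card_masked hb hvb j.isLt)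
  calc (∑ j : Fin v, Fintype.card ((Fin (2*kf+2*0) → A.Q × (Fin (2*kf+2*0) → Fin (n+1)))
        × ({i : Fin n // ¬ blockOf v b i.val = j.val} → Bool)))
      ≤ ∑ _j : Fin v, (m * (n+1)^(2*kf+2*0))^(2*kf+2*0) * 2^(n - b) :=
        Finset.sum_le_sum (fun j _ => hbound j)
    _ = v * ((m * (n+1)^(2*kf+2*0))^(2*kf+2*0) * 2^(n - b)) := by
        rw [Finset.sum_const, Finset.card_univ, Fintype.card_fin, smul_eq_mul]

end DisjProof

end KeyType
/-- Let `n, m, kf` be positive integers and set `k = 2*kf` and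
`v = kf^2 + 1`.  If `k^2·v·log₂(n+1) + k·v·log₂ m + v·(1 + log₂ v) ≤ n`, then the set
disjointness problem `Disj_n` cannot be solved by any mp2s-automaton with parameters
`(D_n, m, kf, 0)`. -/
theorem disj_lower_bound_forward (n m kf : ℕ) (hn : 1 ≤ n) (hm : 1 ≤ m) (hkf : 1 ≤ kf)
    (h : (((2 * kf) ^ 2 * (kf ^ 2 + 1) : ℕ) : ℝ) * Real.logb 2 ((n : ℝ) + 1)
        + ((2 * kf * (kf ^ 2 + 1) : ℕ) : ℝ) * Real.logb 2 (m : ℝ)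
        + ((kf ^ 2 + 1 : ℕ) : ℝ) * (1 + Real.logb 2 ((kf ^ 2 + 1 : ℕ) : ℝ)) ≤ (n : ℝ)) :
    ∀ A : MP2S (MP2S.Dn n) m kf 0, ¬ MP2S.SolvesDisj n A := by
  classical
  intro A hsolve
  open DisjProof MP2S in
  obtain ⟨hvn, hnum⟩ := DisjProof.counting hn hm hkf h
  have hkf2 : 1 ≤ kf^2 := by nlinarith
  have hv0 : 0 < kf^2 + 1 := by omega
  set b := n / (kf^2+1) with hbdef
  have hb1 : 1 ≤ b := by rw [hbdef]; exact (Nat.one_le_div_iff hv0).mpr hvn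
  have hvb : (kf^2+1) * b ≤ n := by rw [hbdef, mul_comm]; exact Nat.div_mul_le_self n _
  have hble : b ≤ n := by rw [hbdef]; exact Nat.div_le_self n _
  -- diagonal inputs are accepted
  have hacc : ∀ X : Fin n → Bool, A.Accepts (SX n X) (TX n X) :=
    fun X => (hsolve _ _ (SX_length n X) (TX_length n X)).mpr (diag_disjoint n X)
  choose dfun hdfun using hacc
  -- a block not covered by any pair of opposite heads
  have hunc := fun X : Fin n → Bool =>
    exists_uncovered A (SX n X) (TX n X) hb1 hvb hkf rfl
  choose jfun hjfun using hunc
  have hjlt : ∀ X, jfun X < kf^2+1 := fun X => (hjfun X).1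
  have hjunc := fun X => (hjfun X).2
  -- stream lengths
  have hlenS : ∀ (X : Fin n → Bool) (i : Fin (2*kf+2*0)),
      (streamOf (SX n X) (TX n X) i).length = n :=
    fun X i => streamOf_length _ _ (SX_length n X) (TX_length n X) i
  -- territory bounds
  have hBE : ∀ X, blockStart b (jfun X) < blockEnd n (kf^2+1) b (jfun X) :=
    fun X => blockStart_lt_blockEnd hb1 hvb (hjlt X)
  have hEn : ∀ X, blockEnd n (kf^2+1) b (jfun X) ≤ n :=
    fun X => blockEnd_le hvb (hjlt X)
  have hloub : ∀ X (hh : Fin (2*kf+2*0)), loH n (kf^2+1) b (jfun X) kf hh ≤ n := by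
    intro X hh
    by_cases hc : hh.val < kf
    · rw [loH_S hc]
      have := hBE X; have := hEn X; omega
    · rw [loH_T hc]; omega
  -- entry times exist
  have hentex : ∀ (X : Fin n → Bool) (hh : Fin (2*kf+2*0)), ∃ t,
      loH n (kf^2+1) b (jfun X) kf hh
        ≤ (A.run (SX n X) (TX n X) t).2 hh := by
    intro X hh
    refine ⟨dfun X, ?_⟩
    have hD := (hdfun X).1 hh
    rw [hlenS X hh] at hD
    exact le_trans (hloub X hh) hD
  -- positions are bounded
  have hposlt : ∀ (X : Fin n → Bool) (t : ℕ) (hh : Fin (2*kf+2*0)),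
      (A.run (SX n X) (TX n X) t).2 hh < n+1 := by
    intro X t hh
    have := A.pos_le_length (SX n X) (TX n X) t hh
    rw [hlenS X hh] at this
    omega
  -- cardinality bound for the sketch
  have hcard : Fintype.card (KeyT A n (kf^2+1) b) < Fintype.card (Fin n → Bool) := by
    have h1 := card_KeyT A n (kf^2+1) b hb1 hvb
    rw [Fintype.card_fun, Fintype.card_bool, Fintype.card_fin]
    have hK : (2*kf+2*0) = 2*kf := by norm_num
    rw [hK] at h1
    have h2 : (kf^2+1) * ((m * (n+1)^(2*kf))^(2*kf) * 2^(n-b))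
        = ((kf^2+1) * (m * (n+1)^(2*kf))^(2*kf)) * 2^(n-b) := by ring
    have h3 : ((kf^2+1) * (m * (n+1)^(2*kf))^(2*kf)) * 2^(n-b) < 2^b * 2^(n-b) :=
      Nat.mul_lt_mul_of_lt_of_le hnum (le_refl _) (by positivity)
    have h4 : 2^b * 2^(n-b) = 2^n := by
      rw [← pow_add]
      congr 1
      omega
    omega
  -- pigeonhole on the sketch map
  obtain ⟨X, X', hne, hΦ⟩ := Fintype.exists_ne_map_eq_of_card_lt
    (fun X : Fin n → Bool =>
      (⟨⟨jfun X, hjlt X⟩,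
        (fun hh => ((A.run (SX n X) (TX n X) (Nat.find (hentex X hh))).1,
          fun hh' => ⟨(A.run (SX n X) (TX n X) (Nat.find (hentex X hh))).2 hh',
            hposlt X _ hh'⟩)),
        (fun i => X i.val)⟩ : KeyT A n (kf^2+1) b)) hcard
  -- unpack the sketch equality
  have hjv : jfun X = jfun X' :=
    congrArg (fun s : KeyT A n (kf^2+1) b => s.1.val) hΦ
  have hskeq : ∀ hh : Fin (2*kf+2*0), A.run (SX n X) (TX n X) (Nat.find (hentex X hh))
      = A.run (SX n X') (TX n X') (Nat.find (hentex X' hh)) := by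
    intro hh
    have hst := congrArg (fun s : KeyT A n (kf^2+1) b => (s.2.1 hh).1) hΦ
    have hps : ∀ hh', (A.run (SX n X) (TX n X) (Nat.find (hentex X hh))).2 hh'
        = (A.run (SX n X') (TX n X') (Nat.find (hentex X' hh))).2 hh' := fun hh' =>
      congrArg (fun s : KeyT A n (kf^2+1) b => ((s.2.1 hh).2 hh').val) hΦ
    exact Prod.ext hst (funext hps)
  have hmaskeq : ∀ i : Fin n, ¬ blockOf (kf^2+1) b i.val = jfun X → X i = X' i := by
    intro i hi
    have hi' : ¬ blockOf (kf^2+1) b i.val = jfun X' := by rw [← hjv]; exact hi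
    have hc := congrArg (fun s : KeyT A n (kf^2+1) b =>
      if hcond : ¬ blockOf (kf^2+1) b i.val = s.1.val then s.2.2 ⟨i, hcond⟩ else true) hΦ
    dsimp only at hc
    rw [dif_pos hi, dif_pos hi'] at hc
    exact hc
  -- the mixed input is accepted, by the splicing lemma
  have hAcc : A.Accepts (SX n X) (TX n X') := by
    refine splice A n (SX n X) (TX n X')
      (fun μ => cond μ (SX n X', TX n X') (SX n X, TX n X))
      (fun hh => decide (hh.val < kf))
      (loH n (kf^2+1) b (jfun X) kf)
      (hiH n (kf^2+1) b (jfun X) kf)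
      (fun μ => cond μ (dfun X') (dfun X))
      (fun μ hh => cond μ (Nat.find (hentex X' hh)) (Nat.find (hentex X hh)))
      (SX_length n X) (TX_length n X') ?_ ?_ ?_ ?_ ?_ ?_ ?_ ?_ ?_ ?_ ?_
    -- hlenR1
    · intro μ; cases μ
      · exact SX_length n X
      · exact SX_length n X'
    -- hlenR2
    · intro μ; cases μ
      · exact TX_length n X
      · exact TX_length n X'
    -- hlohi
    · intro hh
      by_cases hc : hh.val < kf
      · rw [loH_S hc, hiH_S hc]; exact hBE X
      · rw [loH_T hc, hiH_T hc]
        have := hBE X; have := hEn X; omega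
    -- hd
    · intro μ; cases μ
      · exact hdfun X
      · exact hdfun X'
    -- hagree1
    · intro μ hh hside; cases μ
      · have hcS : hh.val < kf := by simpa using hside
        show streamOf (SX n X) (TX n X') hh = streamOf (SX n X) (TX n X) hh
        rw [streamOf_eq, streamOf_eq, if_pos hcS, if_pos hcS]
      · have hcT : ¬ hh.val < kf := by simpa using hside
        show streamOf (SX n X) (TX n X') hh = streamOf (SX n X') (TX n X') hh
        rw [streamOf_eq, streamOf_eq, if_neg hcT, if_neg hcT]
    -- hagree2
    · intro μ hh p hside hout; cases μ
      · have hcT : ¬ hh.val < kf := by simpa using hside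
        rw [loH_T hcT] at hout
        rw [hiH_T hcT] at hout
        show (streamOf (SX n X) (TX n X') hh)[p]? = (streamOf (SX n X) (TX n X) hh)[p]?
        rw [streamOf_eq, streamOf_eq, if_neg hcT, if_neg hcT]
        rw [TX_getElem?, TX_getElem?]
        by_cases hp : p < n
        · rw [dif_pos hp, dif_pos hp]
          have hlt : n - 1 - p < n := by omega
          have hnb : ¬ blockOf (kf^2+1) b (n - 1 - p) = jfun X := by
            rw [blockOf_eq_iff hb1 hlt (hjlt X)]
            have := hBE X; have := hEn X
            omega
          have := hmaskeq (rev (⟨p, hp⟩ : Fin n)) hnb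
          rw [this]
        · rw [dif_neg hp, dif_neg hp]
      · have hcS : hh.val < kf := by simpa using hside
        rw [loH_S hcS] at hout
        rw [hiH_S hcS] at hout
        show (streamOf (SX n X) (TX n X') hh)[p]? = (streamOf (SX n X') (TX n X') hh)[p]?
        rw [streamOf_eq, streamOf_eq, if_pos hcS, if_pos hcS]
        rw [SX_getElem?, SX_getElem?]
        by_cases hp : p < n
        · rw [dif_pos hp, dif_pos hp]
          have hnb : ¬ blockOf (kf^2+1) b p = jfun X := by
            rw [blockOf_eq_iff hb1 hp (hjlt X)]
            omega
          have := hmaskeq ⟨p, hp⟩ hnb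
          rw [this]
        · rw [dif_neg hp, dif_neg hp]
    -- huncov
    · intro μ t g g' hsid hg1 hg2 hg3 hg4; cases μ
      · by_cases hgS : g.val < kf
        · have hg'T : ¬ g'.val < kf := by
            intro hcon
            apply hsid
            simp [hgS, hcon]
          exact hjunc X g g' hgS hg'T ⟨t, hg1, hg2, hg3, hg4⟩
        · have hg'S : g'.val < kf := by
            by_contra hcon
            apply hsid
            simp [hgS, hcon]
          exact hjunc X g' g hg'S hgS ⟨t, hg3, hg4, hg1, hg2⟩
      · have hpc : ∀ gg gg' : Fin (2*kf+2*0), gg.val < kf → ¬ gg'.val < kf →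
            ¬ PairCov A (SX n X') (TX n X') n (kf^2+1) b (jfun X) gg gg' := by
          rw [hjv]
          exact hjunc X'
        by_cases hgS : g.val < kf
        · have hg'T : ¬ g'.val < kf := by
            intro hcon
            apply hsid
            simp [hgS, hcon]
          exact hpc g g' hgS hg'T ⟨t, hg1, hg2, hg3, hg4⟩
        · have hg'S : g'.val < kf := by
            by_contra hcon
            apply hsid
            simp [hgS, hcon]
          exact hpc g' g hg'S hgS ⟨t, hg3, hg4, hg1, hg2⟩
    -- he1
    · intro μ hh; cases μ
      · exact Nat.find_spec (hentex X hh)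
      · show loH n (kf^2+1) b (jfun X) kf hh
            ≤ (A.run (SX n X') (TX n X') (Nat.find (hentex X' hh))).2 hh
        rw [hjv]
        exact Nat.find_spec (hentex X' hh)
    -- he2
    · intro μ hh t ht; cases μ
      · show (A.run (SX n X) (TX n X) t).2 hh < loH n (kf^2+1) b (jfun X) kf hh
        have ht0 : t < Nat.find (hentex X hh) := ht
        have := Nat.find_min (hentex X hh) ht0
        omega
      · show (A.run (SX n X') (TX n X') t).2 hh < loH n (kf^2+1) b (jfun X) kf hh
        rw [hjv]
        have ht' : t < Nat.find (hentex X' hh) := ht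
        have := Nat.find_min (hentex X' hh) ht'
        omega
    -- hsk
    · intro hh
      exact hskeq hh
    -- hinit
    · by_cases hj0 : jfun X = 0
      · refine ⟨false, ?_⟩
        intro hh hside
        have hcT : ¬ hh.val < kf := by simpa using hside
        rw [loH_T hcT, hj0]
        have hbe0 : blockEnd n (kf^2+1) b 0 = b := by
          unfold blockEnd
          rw [if_neg (by omega)]
          omega
        rw [hbe0]
        have h2b : 2*b ≤ (kf^2+1)*b := Nat.mul_le_mul_right b (by omega)
        omega
      · refine ⟨true, ?_⟩
        intro hh hside
        have hcS : hh.val < kf := by simpa using hside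
        rw [loH_S hcS]
        exact Nat.mul_pos (by omega) (by omega)
  -- the mixed input must be rejected : contradiction
  have hdisj := (hsolve (SX n X) (TX n X') (SX_length n X) (TX_length n X')).mp hAcc
  obtain ⟨i0, hi0⟩ := Function.ne_iff.mp hne
  have hmem1 : (i0, X i0) ∈ SX n X := mem_SX.mpr ⟨i0, rfl⟩
  have hmem2 : (i0, X i0) ∈ TX n X' := mem_TX.mpr ⟨i0, by
    have hxb : X i0 = !X' i0 := by
      cases hc1 : X i0 <;> cases hc2 : X' i0 <;> simp_all
    rw [hxb]⟩
  exact hdisj _ hmem1 hmem2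
end
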